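/- Let S be an asymptotically compact semiflow on a complete metric space X and let 𝒜 be an attractor with attraction basin Ω = Ω(𝒜). Then for any δ > 0 such that the closed δ-neighborhood K = cl B(𝒜,δ) satisfies K ⊂⊂ Ω, there exists a continuous function V : X → ℝ such that: V = 0 on 𝒜; 0 < V(x) ≤ 1 for x ∉ cl B(𝒜,δ); V = 1 on X \ Ω; and D⁺V(x) ≤ −v(x) for all x ∈ X, where v : X → [0,∞) is a continuous function with 0 < v(x) ≤ 1 for x ∈ Ω \ cl B(𝒜,δ) and v(x) = 0 for x ∉ Ω \ 𝒜. -/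

import Mathlib

open Metric Set Filter Topology Bornology

/-- A semiflow on a metric space `X`: a map `S : [0,∞) × X → X`, continuous on
`[0,∞) × X`, with `S 0 x = x` and `S (t+s) x = S t (S s x)` for `t, s ≥ 0`. -/
structure Semiflow (X : Type*) [MetricSpace X] where
  toFun : ℝ → X → X
  continuousOn : ContinuousOn (fun p : ℝ × X => toFun p.1 p.2) (Set.Ici (0:ℝ) ×ˢ Set.univ)
  map_zero : ∀ x, toFun 0 x = x
  map_add : ∀ (t s : ℝ), 0 ≤ t → 0 ≤ s → ∀ x, toFun (t + s) x = toFun t (toFun s x)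

namespace Semiflow

variable {X : Type*} [MetricSpace X] (φ : Semiflow X)

/-- Asymptotic compactness: every bounded sequence `x n`, with times `t n → ∞`,
such that `S (t n) (x n)` is bounded, has a convergent subsequence of images. -/
def AsympCompact : Prop :=
  ∀ (x : ℕ → X) (t : ℕ → ℝ), (∀ n, 0 ≤ t n) →
    IsBounded (Set.range x) → Tendsto t atTop atTop →
    IsBounded (Set.range fun n => φ.toFun (t n) (x n)) →
    ∃ (y : X) (k : ℕ → ℕ), StrictMono k ∧
      Tendsto (fun n => φ.toFun (t (k n)) (x (k n))) atTop (𝓝 y)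

/-- `M` attracts `B`: for every `ε > 0` there is `T > 0` with
`S t B ⊆ B(M,ε)` for all `t > T`. -/
def Attracts (M B : Set X) : Prop :=
  ∀ ε > (0:ℝ), ∃ T > (0:ℝ), ∀ t > T, ∀ x ∈ B, infDist (φ.toFun t x) M < ε

/-- `M` is invariant: `S t M = M` for all `t ≥ 0`. -/
def Invariant (M : Set X) : Prop :=
  ∀ t ≥ (0:ℝ), φ.toFun t '' M = M

/-- An attractor: a compact invariant set attracting a neighborhood of itself. -/
def IsAttractor (A : Set X) : Prop :=
  IsCompact A ∧ φ.Invariant A ∧ ∃ U : Set X, A ⊆ interior U ∧ φ.Attracts A U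

/-- The attraction basin of `A`: points whose orbits converge to `A`. -/
def basin (A : Set X) : Set X :=
  {x | Tendsto (fun t : ℝ => infDist (φ.toFun t x) A) atTop (𝓝 0)}

/-- The ω-limit set of a set `A`. -/
def omegaLimit (A : Set X) : Set X :=
  {y | ∃ (x : ℕ → X) (t : ℕ → ℝ), (∀ n, x n ∈ A) ∧ (∀ n, 0 ≤ t n) ∧
    Tendsto t atTop atTop ∧ Tendsto (fun n => φ.toFun (t n) (x n)) atTop (𝓝 y)}

/-- A complete trajectory of the semiflow. -/
def IsCompleteTraj (γ : ℝ → X) : Prop :=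
  ∀ s t : ℝ, s ≤ t → γ t = φ.toFun (t - s) (γ s)

/-- ω-limit set of a complete trajectory. -/
def trajOmega (γ : ℝ → X) : Set X :=
  {y | ∃ t : ℕ → ℝ, Tendsto t atTop atTop ∧ Tendsto (fun n => γ (t n)) atTop (𝓝 y)}

/-- α-limit set of a complete trajectory. -/
def trajAlpha (γ : ℝ → X) : Set X :=
  {y | ∃ t : ℕ → ℝ, Tendsto t atTop atBot ∧ Tendsto (fun n => γ (t n)) atTop (𝓝 y)}

/-- The dual repeller of `A` inside `𝒜`. -/
def dualRepeller (𝒜 A : Set X) : Set X :=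
  {x ∈ 𝒜 | φ.omegaLimit {x} ∩ A = ∅}

/-- `A` is an attractor of the restricted semiflow on the invariant set `𝒜`:
`A ⊆ 𝒜` is compact, invariant, and attracts a relative neighborhood of itself in `𝒜`. -/
def IsAttractorIn (𝒜 A : Set X) : Prop :=
  A ⊆ 𝒜 ∧ IsCompact A ∧ φ.Invariant A ∧
    ∃ V : Set X, IsOpen V ∧ A ⊆ V ∧ φ.Attracts A (𝒜 ∩ V)

/-- `M 1, …, M l` is a Morse decomposition of `𝒜` with Morse filtration
`∅ = A 0 ⊊ A 1 ⊊ ⋯ ⊊ A l = 𝒜`. -/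
def IsMorseDecompositionWithFiltration (𝒜 : Set X) (l : ℕ) (M A : ℕ → Set X) : Prop :=
  A 0 = (∅ : Set X) ∧ A l = 𝒜 ∧
  (∀ k, 1 ≤ k → k ≤ l → φ.IsAttractorIn 𝒜 (A k)) ∧
  (∀ k, 1 ≤ k → k ≤ l → A (k - 1) ⊂ A k) ∧
  (∀ k, 1 ≤ k → k ≤ l → M k = A k ∩ φ.dualRepeller 𝒜 (A (k - 1)))

/-- `M 1, …, M l` is a Morse decomposition of `𝒜`. -/
def IsMorseDecomposition (𝒜 : Set X) (l : ℕ) (M : ℕ → Set X) : Prop :=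
  ∃ A : ℕ → Set X, φ.IsMorseDecompositionWithFiltration 𝒜 l M A

/-- The Dini derivative of `V` along the semiflow. -/
noncomputable def dini (V : X → ℝ) (x : X) : ℝ :=
  Filter.limsup (fun t : ℝ => (V (φ.toFun t x) - V x) / t) (𝓝[>] (0:ℝ))

end Semiflow

/-- `A ⊂⊂ B`: the closure of `A` is contained in the interior of `B` and
`dist (A, ∂B) > 0`. -/
def WayInside {X : Type*} [MetricSpace X] (A B : Set X) : Prop :=
  closure A ⊆ interior B ∧ ∃ δ > (0:ℝ), ∀ x ∈ A, ∀ y ∈ frontier B, δ ≤ dist x y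

/-- `V` is radially unbounded on the open set `Ω`. -/
def RadiallyUnbounded {X : Type*} [MetricSpace X] (V : X → ℝ) (Ω : Set X) : Prop :=
  ∀ R > (0:ℝ), ∃ B : Set X, IsBounded B ∧ IsClosed B ∧ B ⊆ Ω ∧ WayInside B Ω ∧
    ∀ x ∈ Ω \ B, R < V x

/-- `F` is a strong deformation retract of `E`. -/
def IsStrongDeformationRetract {X : Type*} [MetricSpace X] (F E : Set X) : Prop :=
  F ⊆ E ∧ ∃ H : ℝ × X → X, ContinuousOn H (Set.Icc (0:ℝ) 1 ×ˢ E) ∧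
    (∀ x ∈ E, H (0, x) = x) ∧ (∀ x ∈ E, H (1, x) ∈ F) ∧
    (∀ σ ∈ Set.Icc (0:ℝ) 1, ∀ x ∈ F, H (σ, x) = x) ∧
    (∀ σ ∈ Set.Icc (0:ℝ) 1, ∀ x ∈ E, H (σ, x) ∈ E)

namespace Semiflow

variable {X : Type*} [MetricSpace X] (φ : Semiflow X)

/-- A Morse–Lyapunov function of the Morse decomposition `M` on `Ω`. -/
def IsMorseLyapunov (Ω : Set X) (l : ℕ) (M : ℕ → Set X) (V : X → ℝ) : Prop :=
  ContinuousOn V Ω ∧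
  (∀ k, 1 ≤ k → k ≤ l → ∃ c : ℝ, ∀ x ∈ M k, V x = c) ∧
  (∀ x ∈ Ω \ ⋃ k ∈ Set.Icc 1 l, M k,
    StrictAntiOn (fun t : ℝ => V (φ.toFun t x)) (Set.Ici (0:ℝ)))

/-- A strict Morse–Lyapunov function: the values on the Morse sets are increasing. -/
def IsStrictMorseLyapunov (Ω : Set X) (l : ℕ) (M : ℕ → Set X) (V : X → ℝ) : Prop :=
  φ.IsMorseLyapunov Ω l M V ∧ ∃ c : ℕ → ℝ,
    (∀ k, 1 ≤ k → k ≤ l → ∀ x ∈ M k, V x = c k) ∧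
    (∀ j k, 1 ≤ j → j < k → k ≤ l → c j < c k)

end Semiflow

/-!
Let `w x = min 1 (d(x, 𝒜) / δ)` and `g x = sup_{t ≥ 0} w (S t x)`. Then `g` is nonincreasing along
orbits, vanishes on `𝒜` and equals `1` outside `cl B(𝒜, δ)`, hence off the basin. It is
continuous: near a point of the basin orbits are uniformly attracted to `𝒜`, so `g` is locally
uniformly approximated by its suprema over compact time intervals `[0, T]`. The exponential
average `V x = ∫₀^∞ e^{-t} g (S t x) dt` satisfies `V (S s x) = e^s ∫ₛ^∞ e^{-u} g (S u x) du`, so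
`t ↦ V (S t x)` is right-differentiable at `0` with derivative `V x - g x`; take `v = g - V ≥ 0`.
-/

open MeasureTheory Real

theorem setIntegral_Ioi_comp_add_right {E : Type*} [NormedAddCommGroup E] [NormedSpace ℝ E]
    (f : ℝ → E) (a s : ℝ) :
    ∫ t in Ioi a, f (t + s) = ∫ u in Ioi (a + s), f u := by
  have h := (measurePreserving_add_right volume s).setIntegral_preimage_emb
    (measurableEmbedding_addRight s) f (Ioi (a + s))
  rwa [preimage_add_const_Ioi, add_sub_cancel_right] at h

theorem setIntegral_exp_neg_mul_pos {k : ℝ → ℝ} (hk : ContinuousOn k (Ici 0))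
    (hk₀ : ∀ t ≥ 0, 0 ≤ k t) (hki : IntegrableOn (fun t => exp (-t) * k t) (Ioi 0))
    {t₀ : ℝ} (ht₀ : 0 ≤ t₀) (hkt₀ : 0 < k t₀) :
    0 < ∫ t in Ioi 0, exp (-t) * k t := by
  have hnear : ∀ᶠ t in 𝓝[>] t₀, 0 < k t :=
    nhdsWithin_mono t₀ (fun t ht => ht₀.trans (le_of_lt ht))
      ((hk t₀ ht₀).eventually_const_lt hkt₀)
  obtain ⟨t₁, hkt₁, ht₁⟩ := (hnear.and self_mem_nhdsWithin).exists
  have hopen : IsOpen (Ioi 0 ∩ k ⁻¹' Ioi 0) :=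
    (hk.mono Ioi_subset_Ici_self).isOpen_inter_preimage isOpen_Ioi isOpen_Ioi
  rw [setIntegral_pos_iff_support_of_nonneg_ae (ae_restrict_of_forall_mem measurableSet_Ioi
    fun t ht => mul_nonneg (exp_pos _).le (hk₀ t (le_of_lt ht))) hki]
  refine (hopen.measure_pos volume ⟨t₁, lt_of_le_of_lt ht₀ ht₁, hkt₁⟩).trans_le
    (measure_mono fun t ht => ⟨mul_ne_zero (exp_pos _).ne' (ne_of_gt ht.2), ht.1⟩)

section CutoffInfDist

variable {X : Type*} [MetricSpace X] {𝒜 : Set X} {δ : ℝ} {x : X}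

noncomputable def cutoffInfDist (𝒜 : Set X) (δ : ℝ) (x : X) : ℝ :=
  min 1 (infDist x 𝒜 / δ)

theorem continuous_cutoffInfDist : Continuous (cutoffInfDist 𝒜 δ) :=
  continuous_const.min ((continuous_infDist_pt 𝒜).div_const δ)

theorem cutoffInfDist_nonneg (hδ : 0 ≤ δ) : 0 ≤ cutoffInfDist 𝒜 δ x :=
  le_min zero_le_one (div_nonneg infDist_nonneg hδ)

theorem cutoffInfDist_le_one : cutoffInfDist 𝒜 δ x ≤ 1 :=
  min_le_left _ _

theorem bddAbove_range_cutoffInfDist : BddAbove (range (cutoffInfDist 𝒜 δ)) :=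
  ⟨1, forall_mem_range.2 fun _ => cutoffInfDist_le_one⟩

theorem cutoffInfDist_of_mem (hx : x ∈ 𝒜) : cutoffInfDist 𝒜 δ x = 0 := by
  simp [cutoffInfDist, infDist_zero_of_mem hx]

theorem cutoffInfDist_eq_one (hδ : 0 < δ) (hx : δ ≤ infDist x 𝒜) :
    cutoffInfDist 𝒜 δ x = 1 :=
  min_eq_left ((one_le_div hδ).2 hx)

theorem cutoffInfDist_le (hδ : 0 < δ) {ε : ℝ} (hx : infDist x 𝒜 ≤ ε * δ) :
    cutoffInfDist 𝒜 δ x ≤ ε :=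
  (min_le_right _ _).trans ((div_le_iff₀ hδ).2 hx)

theorem le_infDist_of_notMem_closure (hx : x ∉ closure {y | infDist y 𝒜 < δ}) :
    δ ≤ infDist x 𝒜 :=
  not_lt.1 fun h => hx (subset_closure h)

end CutoffInfDist

namespace Semiflow

variable {X : Type*} [MetricSpace X]

section Basic

variable (φ : Semiflow X)

noncomputable def orbitSup (f : X → ℝ) (I : Set ℝ) (x : X) : ℝ :=
  sSup ((fun t => f (φ.toFun t x)) '' I)

noncomputable def expAvg (g : X → ℝ) (x : X) : ℝ :=
  ∫ t in Ioi 0, exp (-t) * g (φ.toFun t x)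

theorem continuous_toFun_max : Continuous fun p : ℝ × X => φ.toFun (max p.1 0) p.2 :=
  φ.continuousOn.comp_continuous ((continuous_fst.max continuous_const).prodMk continuous_snd)
    fun _ => ⟨mem_Ici.2 (le_max_right _ _), mem_univ _⟩

theorem continuous_toFun {t : ℝ} (ht : 0 ≤ t) : Continuous (φ.toFun t) := by
  convert φ.continuous_toFun_max.comp (Continuous.prodMk_right (X := ℝ) t) using 1
  ext x
  simp [max_eq_left ht]

theorem continuousOn_toFun_left (x : X) : ContinuousOn (fun t => φ.toFun t x) (Ici 0) :=
  (φ.continuous_toFun_max.comp (Continuous.prodMk_left x)).continuousOn.congr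
    fun t ht => by simp [max_eq_left (mem_Ici.1 ht)]

end Basic

variable {φ : Semiflow X}

theorem Invariant.toFun_mem {M : Set X} (hM : φ.Invariant M) {x : X} (hx : x ∈ M) {t : ℝ}
    (ht : 0 ≤ t) : φ.toFun t x ∈ M :=
  hM t ht ▸ mem_image_of_mem _ hx

theorem mem_basin_of_toFun_mem {A : Set X} {x : X} {s : ℝ} (hs : 0 ≤ s)
    (h : φ.toFun s x ∈ φ.basin A) : x ∈ φ.basin A := by
  refine (h.comp (tendsto_atTop_add_const_right atTop (-s) tendsto_id)).congr' ?_
  filter_upwards [eventually_ge_atTop s] with t ht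
  rw [Function.comp_apply, id, ← φ.map_add _ s (by linarith) hs, neg_add_cancel_right]

theorem dini_eq_of_hasDerivWithinAt {V : X → ℝ} {x : X} {d : ℝ}
    (h : HasDerivWithinAt (fun t => V (φ.toFun t x)) d (Ici 0) 0) : φ.dini V x = d := by
  have hslope : Tendsto (slope (fun t => V (φ.toFun t x)) 0) (𝓝[>] 0) (𝓝 d) :=
    (hasDerivWithinAt_iff_tendsto_slope' (lt_irrefl 0)).1 h.Ioi_of_Ici
  refine hslope.limsup_eq ▸ limsup_congr (eventually_nhdsWithin_of_forall fun t _ => ?_)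
  rw [slope_def_field, φ.map_zero, sub_zero]

theorem IsAttractor.exists_eventually_infDist_lt {𝒜 : Set X} (h𝒜 : φ.IsAttractor 𝒜)
    {x₀ : X} (hx₀ : x₀ ∈ φ.basin 𝒜) {ε : ℝ} (hε : 0 < ε) :
    ∃ T, ∀ᶠ x in 𝓝 x₀, ∀ t ≥ T, infDist (φ.toFun t x) 𝒜 < ε := by
  obtain ⟨h𝒜c, -, U, hU, hUA⟩ := h𝒜
  rcases 𝒜.eq_empty_or_nonempty with rfl | hne
  · exact ⟨0, .of_forall fun x t _ => by simpa using hε⟩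
  obtain ⟨r, hr, hrU⟩ := h𝒜c.exists_thickening_subset_open isOpen_interior hU
  -- once the orbit of `x₀` is `r`-close to `𝒜`, nearby orbits enter `U` too and are attracted
  have hU_of_lt : ∀ y, infDist y 𝒜 < r → y ∈ U := fun y hy =>
    interior_subset (hrU ((mem_thickening_iff_infDist_lt hne).2 hy))
  obtain ⟨T₀, hT₀, hx₀T₀⟩ : ∃ T₀ ≥ (0 : ℝ), infDist (φ.toFun T₀ x₀) 𝒜 < r :=
    ((hx₀.eventually (gt_mem_nhds hr)).and (eventually_ge_atTop 0)).exists.imp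
      fun t ht => ⟨ht.2, ht.1⟩
  obtain ⟨T₁, hT₁, hAttr⟩ := hUA ε hε
  refine ⟨T₀ + T₁ + 1, ?_⟩
  have hnear : ∀ᶠ x in 𝓝 x₀, infDist (φ.toFun T₀ x) 𝒜 < r :=
    ((continuous_infDist_pt 𝒜).comp (φ.continuous_toFun hT₀)).continuousAt.eventually_lt
      continuousAt_const hx₀T₀
  filter_upwards [hnear] with x hx t ht
  rw [← sub_add_cancel t T₀, φ.map_add _ _ (by linarith) hT₀]
  exact hAttr _ (by linarith) _ (hU_of_lt _ hx)

section OrbitSup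

variable {f : X → ℝ} {I J : Set ℝ} {x : X}

theorem le_orbitSup (hf : BddAbove (range f)) {t : ℝ} (ht : t ∈ I) :
    f (φ.toFun t x) ≤ φ.orbitSup f I x :=
  le_csSup (hf.mono (image_subset_range _ _ |>.trans (range_comp_subset_range _ f)))
    (mem_image_of_mem _ ht)

theorem orbitSup_le (hI : I.Nonempty) {c : ℝ} (h : ∀ t ∈ I, f (φ.toFun t x) ≤ c) :
    φ.orbitSup f I x ≤ c :=
  csSup_le (hI.image _) (forall_mem_image.2 h)

theorem orbitSup_mono (hf : BddAbove (range f)) (hI : I.Nonempty) (hIJ : I ⊆ J) :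
    φ.orbitSup f I x ≤ φ.orbitSup f J x :=
  orbitSup_le hI fun _ ht => le_orbitSup hf (hIJ ht)

theorem orbitSup_Ici_toFun_le (hf : BddAbove (range f)) {s : ℝ} (hs : 0 ≤ s) :
    φ.orbitSup f (Ici 0) (φ.toFun s x) ≤ φ.orbitSup f (Ici 0) x :=
  orbitSup_le nonempty_Ici fun t ht => by
    rw [← φ.map_add t s ht hs]
    exact le_orbitSup hf (mem_Ici.2 (add_nonneg ht hs))

theorem continuous_orbitSup_Icc (hf : Continuous f) (T : ℝ) :
    Continuous (φ.orbitSup f (Icc 0 T)) := by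
  have hcont : Continuous ↿fun (x : X) (t : ℝ) => f (φ.toFun (max t 0) x) :=
    hf.comp (φ.continuous_toFun_max.comp continuous_swap)
  refine ((isCompact_Icc (a := 0) (b := T)).continuous_sSup hcont).congr fun x => ?_
  exact congrArg sSup (image_congr fun t ht => by rw [max_eq_left ht.1])

/-- The suprema over `[0, T]` converge locally uniformly as `T → ∞`. -/
theorem continuous_orbitSup_Ici (hf : Continuous f) (hfb : BddAbove (range f))
    (htail : ∀ x₀, ∀ ε > 0, ∃ T, ∀ᶠ x in 𝓝 x₀, ∀ t ≥ T, f (φ.toFun t x) ≤ f x + ε) :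
    Continuous (φ.orbitSup f (Ici 0)) := by
  refine TendstoLocallyUniformly.continuous (p := atTop)
    (F := fun T => φ.orbitSup f (Icc 0 T)) ?_
    (.of_forall fun T => continuous_orbitSup_Icc hf T)
  refine Metric.tendstoLocallyUniformly_iff.2 fun ε hε x₀ => ?_
  obtain ⟨T, hT⟩ := htail x₀ (ε / 2) (half_pos hε)
  refine ⟨_, hT, ?_⟩
  filter_upwards [eventually_ge_atTop (max T 0)] with n hn x hx
  have hn₀ : (0 : ℝ) ∈ Icc 0 n := ⟨le_rfl, (le_max_right _ _).trans hn⟩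
  have hlow : φ.orbitSup f (Icc 0 n) x ≤ φ.orbitSup f (Ici 0) x :=
    orbitSup_mono hfb ⟨0, hn₀⟩ Icc_subset_Ici_self
  have hup : φ.orbitSup f (Ici 0) x ≤ φ.orbitSup f (Icc 0 n) x + ε / 2 := by
    refine orbitSup_le nonempty_Ici fun t ht => ?_
    rcases le_total t n with htn | hnt
    · linarith [le_orbitSup (φ := φ) (x := x) hfb (show t ∈ Icc 0 n from ⟨ht, htn⟩)]
    · have hx₀ := le_orbitSup (φ := φ) (x := x) hfb hn₀
      rw [φ.map_zero] at hx₀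
      linarith [hx t ((le_max_left _ _).trans (hn.trans hnt))]
  rw [Real.dist_eq, abs_lt]
  constructor <;> linarith

end OrbitSup

section CutoffOrbitSup

variable {𝒜 : Set X} {δ : ℝ} {x : X}

theorem IsAttractor.continuous_orbitSup_cutoffInfDist (h𝒜 : φ.IsAttractor 𝒜) (hδ : 0 < δ)
    (hK : closure {y | infDist y 𝒜 < δ} ⊆ φ.basin 𝒜) :
    Continuous (φ.orbitSup (cutoffInfDist 𝒜 δ) (Ici 0)) := by
  refine continuous_orbitSup_Ici continuous_cutoffInfDist bddAbove_range_cutoffInfDist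
    fun x₀ ε hε => ?_
  by_cases hx₀ : x₀ ∈ φ.basin 𝒜
  · obtain ⟨T, hT⟩ := h𝒜.exists_eventually_infDist_lt hx₀ (mul_pos hε hδ)
    refine ⟨T, hT.mono fun x hx t ht => ?_⟩
    linarith [cutoffInfDist_le hδ (hx t ht).le, cutoffInfDist_nonneg (𝒜 := 𝒜) (x := x) hδ.le]
  · -- off the basin `x₀` is `δ`-far from `𝒜`, so the cutoff is nearly `1` near `x₀`
    have h₁ : cutoffInfDist 𝒜 δ x₀ = 1 :=
      cutoffInfDist_eq_one hδ (le_infDist_of_notMem_closure fun h => hx₀ (hK h))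
    have hnear : ∀ᶠ x in 𝓝 x₀, 1 - ε < cutoffInfDist 𝒜 δ x :=
      continuous_cutoffInfDist.continuousAt.eventually_const_lt (by linarith)
    refine ⟨0, hnear.mono fun x hx t _ => ?_⟩
    linarith [cutoffInfDist_le_one (𝒜 := 𝒜) (δ := δ) (x := φ.toFun t x)]

theorem orbitSup_cutoffInfDist_nonneg (hδ : 0 ≤ δ) :
    0 ≤ φ.orbitSup (cutoffInfDist 𝒜 δ) (Ici 0) x :=
  (cutoffInfDist_nonneg hδ).trans (le_orbitSup bddAbove_range_cutoffInfDist self_mem_Ici)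

theorem orbitSup_cutoffInfDist_le_one : φ.orbitSup (cutoffInfDist 𝒜 δ) (Ici 0) x ≤ 1 :=
  orbitSup_le nonempty_Ici fun _ _ => cutoffInfDist_le_one

theorem abs_orbitSup_cutoffInfDist_le_one (hδ : 0 ≤ δ) :
    |φ.orbitSup (cutoffInfDist 𝒜 δ) (Ici 0) x| ≤ 1 :=
  abs_le.2 ⟨by linarith [orbitSup_cutoffInfDist_nonneg (φ := φ) (𝒜 := 𝒜) (x := x) hδ],
    orbitSup_cutoffInfDist_le_one⟩

theorem Invariant.orbitSup_cutoffInfDist_eq_zero (h𝒜 : φ.Invariant 𝒜) (hδ : 0 ≤ δ)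
    (hx : x ∈ 𝒜) : φ.orbitSup (cutoffInfDist 𝒜 δ) (Ici 0) x = 0 :=
  le_antisymm (orbitSup_le nonempty_Ici fun _ ht => (cutoffInfDist_of_mem
    (h𝒜.toFun_mem hx ht)).le) (orbitSup_cutoffInfDist_nonneg hδ)

theorem orbitSup_cutoffInfDist_eq_one (hδ : 0 < δ) (hx : δ ≤ infDist x 𝒜) :
    φ.orbitSup (cutoffInfDist 𝒜 δ) (Ici 0) x = 1 := by
  refine le_antisymm orbitSup_cutoffInfDist_le_one ?_
  have h := le_orbitSup (φ := φ) (x := x) (bddAbove_range_cutoffInfDist (𝒜 := 𝒜) (δ := δ))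
    (self_mem_Ici (a := 0))
  rwa [φ.map_zero, cutoffInfDist_eq_one hδ hx] at h

theorem exists_orbitSup_cutoffInfDist_toFun_lt_one (hδ : 0 < δ) (hx : x ∈ φ.basin 𝒜) :
    ∃ T ≥ 0, φ.orbitSup (cutoffInfDist 𝒜 δ) (Ici 0) (φ.toFun T x) < 1 := by
  obtain ⟨T, hT⟩ := eventually_atTop.1 (hx.eventually (gt_mem_nhds (half_pos hδ)))
  refine ⟨max T 0, le_max_right _ _,
    (orbitSup_le nonempty_Ici fun t ht => ?_).trans_lt one_half_lt_one⟩
  rw [← φ.map_add t _ ht (le_max_right _ _)]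
  refine cutoffInfDist_le hδ ((hT _ ?_).le.trans_eq (by ring))
  linarith [le_max_left T 0, mem_Ici.1 ht]

end CutoffOrbitSup

section ExpAvg

variable {g : X → ℝ} {C c : ℝ} {x : X}

theorem continuousOn_exp_neg_mul_comp_toFun (hg : Continuous g) (x : X) :
    ContinuousOn (fun t => exp (-t) * g (φ.toFun t x)) (Ici 0) :=
  (continuous_exp.comp continuous_neg).continuousOn.mul
    (hg.comp_continuousOn (φ.continuousOn_toFun_left x))

theorem integrableOn_exp_neg_mul_comp_toFun (hg : Continuous g) (hgC : ∀ y, |g y| ≤ C)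
    (x : X) : IntegrableOn (fun t => exp (-t) * g (φ.toFun t x)) (Ioi 0) :=
  (integrableOn_exp_neg_Ioi 0).mul_bdd
    ((hg.comp_continuousOn (φ.continuousOn_toFun_left x)).mono Ioi_subset_Ici_self
      |>.aestronglyMeasurable measurableSet_Ioi)
    (ae_of_all _ fun _ => (Real.norm_eq_abs _).trans_le (hgC _))

theorem continuous_expAvg (hg : Continuous g) (hgC : ∀ y, |g y| ≤ C) :
    Continuous (φ.expAvg g) := by
  refine continuous_of_dominated (bound := fun t => exp (-t) * C)
    (fun x => (integrableOn_exp_neg_mul_comp_toFun hg hgC x).aestronglyMeasurable)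
    (fun x => ae_of_all _ fun t => ?_) ((integrableOn_exp_neg_Ioi 0).mul_const C)
    (ae_restrict_of_forall_mem measurableSet_Ioi fun t ht =>
      continuous_const.mul (hg.comp (φ.continuous_toFun (le_of_lt ht))))
  rw [norm_mul, Real.norm_of_nonneg (exp_pos _).le, Real.norm_eq_abs]
  exact mul_le_mul_of_nonneg_left (hgC _) (exp_pos _).le

theorem expAvg_eq_of_forall (h : ∀ t ≥ 0, g (φ.toFun t x) = c) : φ.expAvg g x = c := by
  rw [expAvg, setIntegral_congr_fun measurableSet_Ioi fun t ht => by rw [h t (le_of_lt ht)],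
    integral_mul_const, integral_exp_neg_Ioi_zero, one_mul]

theorem expAvg_eq_self_of_forall_eq (h : ∀ t ≥ 0, g (φ.toFun t x) = c) :
    φ.expAvg g x = g x := by
  rw [expAvg_eq_of_forall h, ← h 0 le_rfl, φ.map_zero]

theorem expAvg_le (hg : Continuous g) (hgC : ∀ y, |g y| ≤ C)
    (h : ∀ t ≥ 0, g (φ.toFun t x) ≤ c) : φ.expAvg g x ≤ c := by
  calc φ.expAvg g x ≤ ∫ t in Ioi 0, exp (-t) * c :=
        setIntegral_mono_on (integrableOn_exp_neg_mul_comp_toFun hg hgC x)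
          ((integrableOn_exp_neg_Ioi 0).mul_const c) measurableSet_Ioi
          fun t ht => mul_le_mul_of_nonneg_left (h t (le_of_lt ht)) (exp_pos _).le
    _ = c := by rw [integral_mul_const, integral_exp_neg_Ioi_zero, one_mul]

theorem expAvg_pos (hg : Continuous g) (hgC : ∀ y, |g y| ≤ C) (hg₀ : ∀ y, 0 ≤ g y)
    (hx : 0 < g x) : 0 < φ.expAvg g x :=
  setIntegral_exp_neg_mul_pos (hg.comp_continuousOn (φ.continuousOn_toFun_left x))
    (fun _ _ => hg₀ _) (integrableOn_exp_neg_mul_comp_toFun hg hgC x) le_rfl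
    (by rwa [φ.map_zero])

theorem expAvg_lt (hg : Continuous g) (hgC : ∀ y, |g y| ≤ C)
    (hle : ∀ t ≥ 0, g (φ.toFun t x) ≤ c) {t₀ : ℝ} (ht₀ : 0 ≤ t₀)
    (hlt : g (φ.toFun t₀ x) < c) : φ.expAvg g x < c := by
  have hc := (integrableOn_exp_neg_Ioi 0).mul_const c
  have hgx := integrableOn_exp_neg_mul_comp_toFun (φ := φ) hg hgC x
  have hgap : ∫ t in Ioi 0, exp (-t) * (c - g (φ.toFun t x)) = c - φ.expAvg g x := by
    simp only [mul_sub]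
    rw [integral_sub hc hgx, integral_mul_const, integral_exp_neg_Ioi_zero, one_mul, expAvg]
  have hpos := setIntegral_exp_neg_mul_pos (k := fun t => c - g (φ.toFun t x))
    (continuousOn_const.sub (hg.comp_continuousOn (φ.continuousOn_toFun_left x)))
    (fun t ht => sub_nonneg.2 (hle t ht))
    (IntegrableOn.congr_fun (hc.sub hgx) (fun t _ => (mul_sub _ _ _).symm) measurableSet_Ioi)
    ht₀ (sub_pos.2 hlt)
  linarith

theorem expAvg_toFun (hg : Continuous g) (hgC : ∀ y, |g y| ≤ C) {s : ℝ} (hs : 0 ≤ s) :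
    φ.expAvg g (φ.toFun s x) =
      exp s * (φ.expAvg g x - ∫ u in 0..s, exp (-u) * g (φ.toFun u x)) := by
  have hint := integrableOn_exp_neg_mul_comp_toFun (φ := φ) hg hgC x
  simp only [expAvg]
  rw [← intervalIntegral.integral_Ioi_sub_Ioi hint hs, sub_sub_cancel,
    show Ioi s = Ioi (0 + s) by rw [zero_add], ← setIntegral_Ioi_comp_add_right,
    ← integral_const_mul]
  refine setIntegral_congr_fun measurableSet_Ioi fun t ht => ?_
  rw [← φ.map_add t s (le_of_lt ht) hs, ← mul_assoc, ← exp_add]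
  ring_nf

theorem hasDerivWithinAt_expAvg_toFun (hg : Continuous g) (hgC : ∀ y, |g y| ≤ C) (x : X) :
    HasDerivWithinAt (fun s => φ.expAvg g (φ.toFun s x)) (φ.expAvg g x - g x) (Ici 0) 0 := by
  have hk := continuousOn_exp_neg_mul_comp_toFun (φ := φ) hg x
  have hFTC : HasDerivWithinAt (fun s => ∫ u in 0..s, exp (-u) * g (φ.toFun u x))
      (exp (-0) * g (φ.toFun 0 x)) (Ici 0) 0 :=
    intervalIntegral.integral_hasDerivWithinAt_right (IntervalIntegrable.refl)
      ((hk.mono Ioi_subset_Ici_self).stronglyMeasurableAtFilter_nhdsWithin measurableSet_Ioi 0)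
      ((hk 0 self_mem_Ici).mono Ioi_subset_Ici_self)
  have hprod : HasDerivWithinAt
      (fun s => exp s * (φ.expAvg g x - ∫ u in 0..s, exp (-u) * g (φ.toFun u x)))
      (exp 0 * (φ.expAvg g x - ∫ u in (0 : ℝ)..0, exp (-u) * g (φ.toFun u x)) +
        exp 0 * (0 - exp (-0) * g (φ.toFun 0 x))) (Ici 0) 0 :=
    (hasDerivAt_exp 0).hasDerivWithinAt.mul ((hasDerivWithinAt_const _ _ _).sub hFTC)
  exact (hprod.congr_deriv (by simp [φ.map_zero, sub_eq_add_neg])).congr_of_mem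
    (fun s hs => expAvg_toFun hg hgC hs) self_mem_Ici

theorem dini_expAvg (hg : Continuous g) (hgC : ∀ y, |g y| ≤ C) (x : X) :
    φ.dini (φ.expAvg g) x = φ.expAvg g x - g x :=
  dini_eq_of_hasDerivWithinAt (hasDerivWithinAt_expAvg_toFun hg hgC x)

end ExpAvg

end Semiflow

open Semiflow

theorem stmt12_general {X : Type*} [MetricSpace X] (φ : Semiflow X)
    (𝒜 : Set X) (h𝒜 : φ.IsAttractor 𝒜)
    (δ : ℝ) (hδ : 0 < δ)
    (hK : WayInside (closure {y : X | Metric.infDist y 𝒜 < δ}) (φ.basin 𝒜)) :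
    ∃ V v : X → ℝ, Continuous V ∧ Continuous v ∧
      (∀ x ∈ 𝒜, V x = 0) ∧
      (∀ x ∉ closure {y : X | Metric.infDist y 𝒜 < δ}, 0 < V x ∧ V x ≤ 1) ∧
      (∀ x ∉ φ.basin 𝒜, V x = 1) ∧
      (∀ x : X, 0 ≤ v x) ∧
      (∀ x ∈ φ.basin 𝒜 \ closure {y : X | Metric.infDist y 𝒜 < δ}, 0 < v x ∧ v x ≤ 1) ∧
      (∀ x ∉ φ.basin 𝒜 \ 𝒜, v x = 0) ∧
      (∀ x : X, φ.dini V x ≤ -v x) := by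
  have hKΩ : closure {y : X | infDist y 𝒜 < δ} ⊆ φ.basin 𝒜 :=
    subset_closure.trans (hK.1.trans interior_subset)
  set g := φ.orbitSup (cutoffInfDist 𝒜 δ) (Ici 0)
  have hg : Continuous g := h𝒜.continuous_orbitSup_cutoffInfDist hδ hKΩ
  have hg₀ : ∀ y, 0 ≤ g y := fun _ => orbitSup_cutoffInfDist_nonneg hδ.le
  have hg₁ : ∀ y, g y ≤ 1 := fun _ => orbitSup_cutoffInfDist_le_one
  have hgC : ∀ y, |g y| ≤ 1 := fun _ => abs_orbitSup_cutoffInfDist_le_one hδ.le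
  have hgK : ∀ x ∉ closure {y : X | infDist y 𝒜 < δ}, g x = 1 := fun x hx =>
    orbitSup_cutoffInfDist_eq_one hδ (le_infDist_of_notMem_closure hx)
  have hg𝒜 : ∀ x ∈ 𝒜, ∀ t ≥ 0, g (φ.toFun t x) = 0 := fun x hx t ht =>
    h𝒜.2.1.orbitSup_cutoffInfDist_eq_zero hδ.le (h𝒜.2.1.toFun_mem hx ht)
  have hgΩ : ∀ x ∉ φ.basin 𝒜, ∀ t ≥ 0, g (φ.toFun t x) = 1 := fun x hx t ht =>
    hgK _ fun h => hx (mem_basin_of_toFun_mem ht (hKΩ h))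
  have hVpos : ∀ x ∉ closure {y : X | infDist y 𝒜 < δ}, 0 < φ.expAvg g x := fun x hx =>
    expAvg_pos hg hgC hg₀ ((hgK x hx).symm ▸ one_pos)
  refine ⟨φ.expAvg g, g - φ.expAvg g, continuous_expAvg hg hgC,
    hg.sub (continuous_expAvg hg hgC), fun x hx => expAvg_eq_of_forall (hg𝒜 x hx),
    fun x hx => ⟨hVpos x hx, expAvg_le hg hgC fun _ _ => hg₁ _⟩,
    fun x hx => expAvg_eq_of_forall (hgΩ x hx),
    fun x => sub_nonneg.2 (expAvg_le hg hgC fun t ht => orbitSup_Ici_toFun_le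
      bddAbove_range_cutoffInfDist ht), fun x ⟨hxΩ, hxK⟩ => ?_, fun x hx => ?_,
    fun x => (dini_expAvg hg hgC x).trans_le (by simp)⟩
  · obtain ⟨T, hT, hlt⟩ := exists_orbitSup_cutoffInfDist_toFun_lt_one hδ hxΩ
    have hV₁ := expAvg_lt hg hgC (fun _ _ => hg₁ _) hT hlt
    simp only [Pi.sub_apply, hgK x hxK]
    constructor <;> linarith [hVpos x hxK]
  · by_cases hxΩ : x ∈ φ.basin 𝒜
    · exact sub_eq_zero.2 (expAvg_eq_self_of_forall_eq (hg𝒜 x (not_not.1 (hx ⟨hxΩ, ·⟩)))).symm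
    · exact sub_eq_zero.2 (expAvg_eq_self_of_forall_eq (hgΩ x hxΩ)).symm

/-- For an attractor `𝒜` with basin `Ω` and `δ > 0` with
`K = cl B(𝒜,δ) ⊂⊂ Ω`, there is a continuous `V : X → ℝ` with `V = 0` on `𝒜`,
`0 < V ≤ 1` outside `K`, `V = 1` on `X \ Ω`, and `D⁺V(x) ≤ -v(x)` everywhere, where
`v` is continuous nonnegative, `0 < v ≤ 1` on `Ω \ K`, and `v = 0` off `Ω \ 𝒜`. -/
theorem stmt12 {X : Type*} [MetricSpace X] [CompleteSpace X] (φ : Semiflow X)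
    (hac : φ.AsympCompact) (𝒜 : Set X) (h𝒜 : φ.IsAttractor 𝒜)
    (δ : ℝ) (hδ : 0 < δ)
    (hK : WayInside (closure {y : X | Metric.infDist y 𝒜 < δ}) (φ.basin 𝒜)) :
    ∃ V v : X → ℝ, Continuous V ∧ Continuous v ∧
      (∀ x ∈ 𝒜, V x = 0) ∧
      (∀ x ∉ closure {y : X | Metric.infDist y 𝒜 < δ}, 0 < V x ∧ V x ≤ 1) ∧
      (∀ x ∉ φ.basin 𝒜, V x = 1) ∧
      (∀ x : X, 0 ≤ v x) ∧
      (∀ x ∈ φ.basin 𝒜 \ closure {y : X | Metric.infDist y 𝒜 < δ}, 0 < v x ∧ v x ≤ 1) ∧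
      (∀ x ∉ φ.basin 𝒜 \ 𝒜, v x = 0) ∧
      (∀ x : X, φ.dini V x ≤ -v x) :=
  stmt12_general φ 𝒜 h𝒜 δ hδ hK
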